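/- arXiv:1707.03956 — 4 statements merged into one kernel-verified Lean document; each statement's English description precedes it below -/
import Mathlib

section
/- Let q ≥ 2, let 1 ≤ k₁ < k₂ ≤ 3, and let x be a word over Σ_q. Suppose x' = T_{i₂,k₂}(T_{i₁,k₁}(x)) for some positions i₁, i₂ (i.e., x' is obtained from x by a tandem duplication of length k₁ followed by one of length k₂). Then there exist t ≥ 1, lengths 3 ≥ ℓ₁ ≥ ℓ₂ ≥ ⋯ ≥ ℓ_t ≥ 1 and positions j₁, j₂, …, j_t such that x' = T_{j_t,ℓ_t} ∘ T_{j_{t−1},ℓ_{t−1}} ∘ ⋯ ∘ T_{j₁,ℓ₁}(x). -/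
/-- Tandem duplication of the length-`k` block starting at position `i`:
`x = u v w` with `|u| = i`, `|v| = k` is sent to `u v v w`. -/
def DupAt {α : Type*} (i k : ℕ) (x y : List α) : Prop :=
  ∃ u v w : List α, x = u ++ v ++ w ∧ u.length = i ∧ v.length = k ∧ y = u ++ v ++ v ++ w

/-- A single tandem duplication of some length between `1` and `k`. -/
def DupLE {α : Type*} (k : ℕ) (x y : List α) : Prop :=
  ∃ u v w : List α, x = u ++ v ++ w ∧ 1 ≤ v.length ∧ v.length ≤ k ∧ y = u ++ v ++ v ++ w

/-- A single tandem duplication of length exactly `k` whose duplicated block has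
pairwise distinct symbols. -/
def DupD {α : Type*} (k : ℕ) (x y : List α) : Prop :=
  ∃ u v w : List α, x = u ++ v ++ w ∧ v.length = k ∧ v.Nodup ∧ y = u ++ v ++ v ++ w

/-- `x ⇒*_{≤k} y`: `y` is obtained from `x` by finitely many tandem duplications of
length at most `k`. -/
def DerivLE {α : Type*} (k : ℕ) : List α → List α → Prop := Relation.ReflTransGen (DupLE k)

/-- `x ⇒*_{k_d} y`: finitely many tandem duplications of length exactly `k`, each
duplicated block having pairwise distinct symbols. -/
def DerivD {α : Type*} (k : ℕ) : List α → List α → Prop := Relation.ReflTransGen (DupD k)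

/-- `x` is `≤k`-irreducible: it contains no square `v v` with `1 ≤ |v| ≤ k`. -/
def IrredLE {α : Type*} (k : ℕ) (x : List α) : Prop :=
  ¬ ∃ u v w : List α, 1 ≤ v.length ∧ v.length ≤ k ∧ x = u ++ v ++ v ++ w

/-- The set of `≤k`-roots of `x`. -/
def RootsLE {α : Type*} (k : ℕ) (x : List α) : Set (List α) :=
  {z | IrredLE k z ∧ DerivLE k z x}

/-- `x` and `y` are `≤k`-confusable. -/
def Confusable {α : Type*} (k : ℕ) (x y : List α) : Prop :=
  ∃ z, DerivLE k x z ∧ DerivLE k y z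

/-- `r` contains at least three distinct symbols. -/
def Has3 {α : Type*} [DecidableEq α] (r : List α) : Prop := 3 ≤ r.toFinset.card

/-- The region `Reg(r)` of a `≤3`-irreducible word `r` with at least three distinct
symbols. -/
def Reg {α : Type*} [DecidableEq α] (r : List α) : List α :=
  if r[0]? = r[2]? then
    if r[1]? ≠ r[4]? then r.take 4
    else if r[2]? ≠ r[5]? then r.take 5
    else r.take 6
  else
    if r[0]? ≠ r[3]? then r.take 3
    else if r[1]? ≠ r[4]? then r.take 4
    else r.take 5

/-- `main(r)`: the first length-3 substring of `r` with pairwise distinct symbols. -/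
def mainSub {α : Type*} [DecidableEq α] (r : List α) : List α :=
  if r[0]? = r[2]? then (r.drop 1).take 3 else r.take 3

/-- The number of occurrences of `z` as a contiguous substring of `x`. -/
def Count {α : Type*} [DecidableEq α] (z x : List α) : ℕ :=
  ((List.range (x.length + 1)).filter fun i => decide ((x.drop i).take z.length = z)).length

/-- `Count(rot(z), x)` for a length-3 word `z = abc`:
occurrences of `abc`, `bca` and `cab` in `x`. -/
def CountRot {α : Type*} [DecidableEq α] (z x : List α) : ℕ :=
  Count z x + Count (z.rotate 1) x + Count (z.rotate 2) x

/-- `ExtPref(g, x)`: the longest prefix of `x` belonging to `D*_{≤3}(g)`. -/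
noncomputable def ExtPref {α : Type*} (g x : List α) : List α :=
  letI : DecidablePred fun n => DerivLE 3 g (x.take n) := Classical.decPred _
  x.take (Nat.findGreatest (fun n => DerivLE 3 g (x.take n)) x.length)

/-- The symbol `a` when `Reg r = w (a b c)^ℓ a b`, i.e. the second-to-last symbol
of `Reg r`. -/
def regA {α : Type*} [DecidableEq α] [Inhabited α] (r : List α) : α :=
  (Reg r).reverse.getD 1 default

/-- The special prefix `*Pref(r, x)`: with `p = ExtPref(Reg r, x)` and `p_i` the last
occurrence of the symbol `a` in `p`, this is `p₁ ⋯ p_{i-1}`. -/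
noncomputable def starPref {α : Type*} [DecidableEq α] [Inhabited α] (r x : List α) : List α :=
  (ExtPref (Reg r) x).take
    ((ExtPref (Reg r) x).length - 1 - (ExtPref (Reg r) x).reverse.idxOf (regA r))

/-- The unique `≤k`-root of `x` (when it is unique). -/
noncomputable def rootLE {α : Type*} (k : ℕ) (x : List α) : List α :=
  letI := Classical.propDecidable (∃ z, RootsLE k x = {z})
  if h : ∃ z, RootsLE k x = {z} then h.choose else x

/-- The sequence `x₁, x₂, …` with `x₁ = x` and `x_{j+1} = x_j ∖ *Pref(r_j, x_j)`
where `r_j` is the unique `≤3`-root of `x_j` (0-indexed: `seqX x j = x_{j+1}`). -/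
noncomputable def seqX {α : Type*} [DecidableEq α] [Inhabited α] (x : List α) : ℕ → List α
  | 0 => x
  | n + 1 => (seqX x n).drop (starPref (rootLE 3 (seqX x n)) (seqX x n)).length

/-- `r_{j+1}`, the unique `≤3`-root of `x_{j+1}` (0-indexed). -/
noncomputable def rj {α : Type*} [DecidableEq α] [Inhabited α] (x : List α) (j : ℕ) : List α :=
  rootLE 3 (seqX x j)

/-- `x` determines `m` regions: the roots `r₁, …, r_m` have at least three distinct
symbols and `r_{m+1}` does not. -/
def HasRegionsX {α : Type*} [DecidableEq α] [Inhabited α] (x : List α) (m : ℕ) : Prop :=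
  (∀ j < m, Has3 (rj x j)) ∧ ¬ Has3 (rj x m)

/-- `c_{j+1}` in the label of `x` (0-indexed):
`Count(main(r_{j+1}), R_{≤2}(p_{j+1}))` where `p_{j+1} = ExtPref(Reg(r_{j+1}), x_{j+1})`. -/
noncomputable def labelC {α : Type*} [DecidableEq α] [Inhabited α] (x : List α) (j : ℕ) : ℕ :=
  Count (mainSub (rj x j)) (rootLE 2 (ExtPref (Reg (rj x j)) (seqX x j)))

/-- `δ_{j+1} = +` in the label of `x` (0-indexed):
`Count(rot(main(r_{j+1})), p_{j+1}) > 0`. -/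
noncomputable def labelPlus {α : Type*} [DecidableEq α] [Inhabited α] (x : List α) (j : ℕ) : Prop :=
  0 < CountRot (mainSub (rj x j)) (ExtPref (Reg (rj x j)) (seqX x j))

/-- The sequence `ρ₁, ρ₂, …` defining the regions of `r`:
`ρ_{j+1}` is `ρ_j` with the prefix `w (abc)^ℓ` removed, where `Reg(ρ_j) = w (abc)^ℓ ab`. -/
def rho {α : Type*} [DecidableEq α] (r : List α) : ℕ → List α
  | 0 => r
  | n + 1 => (rho r n).drop ((Reg (rho r n)).length - 2)

/-- The `≤3`-irreducible word `r` has exactly `m` regions. -/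
def HasRegionsR {α : Type*} [DecidableEq α] (r : List α) (m : ℕ) : Prop :=
  (∀ j < m, Has3 (rho r j)) ∧ ¬ Has3 (rho r m)

/-- `C` is an `(n, ≤3; r)`-TD code: words of length `n` in `D*_{≤3}(r)`, pairwise
non-`≤3`-confusable. -/
def TDCode (n : ℕ) (r : List (Fin 3)) (C : Finset (List (Fin 3))) : Prop :=
  (∀ x ∈ C, x.length = n ∧ DerivLE 3 r x) ∧
    ∀ x ∈ C, ∀ y ∈ C, x ≠ y → ¬ Confusable 3 x y

/-- `T(n, r)`: the maximum size of an `(n, ≤3; r)`-TD code. -/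
noncomputable def Tnr (n : ℕ) (r : List (Fin 3)) : ℕ :=
  sSup {k | ∃ C : Finset (List (Fin 3)), TDCode n r C ∧ C.card = k}

/-- `C` is an `(n, ≤3; 3)`-TD code. -/
def TDCodeAll (n : ℕ) (C : Finset (List (Fin 3))) : Prop :=
  (∀ x ∈ C, x.length = n) ∧ ∀ x ∈ C, ∀ y ∈ C, x ≠ y → ¬ Confusable 3 x y

/-- `T(n)`: the maximum size of an `(n, ≤3; 3)`-TD code. -/
noncomputable def Tn (n : ℕ) : ℕ :=
  sSup {k | ∃ C : Finset (List (Fin 3)), TDCodeAll n C ∧ C.card = k}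

/-- `|Irr_{≤3}(i, 3)|`: the number of `≤3`-irreducible ternary words of length `i`. -/
noncomputable def IrrCount (i : ℕ) : ℕ :=
  Nat.card {x : List (Fin 3) // x.length = i ∧ IrredLE 3 x}

/-- The two codewords of Construction 2 built from the `≤3`-irreducible word
`r = r₁ r₂ ⋯ r_i` (with `i ≥ 4`). -/
def C2 (r : List (Fin 3)) : List (Fin 3) × List (Fin 3) :=
  let r1 := r.getD 0 0; let r2 := r.getD 1 0; let r3 := r.getD 2 0
  let r4 := r.getD 3 0; let r5 := r.getD 4 0
  if r1 ≠ r3 then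
    (r.take 3 ++ r, [r1, r2, r2, r3, r3, r4, r4] ++ r.drop 4)
  else if 5 ≤ r.length then
    ([r1, r2, r1, r4, r2, r1, r4] ++ r.drop 4,
      [r1, r2, r1, r1, r4, r4, r5, r5] ++ r.drop 5)
  else
    ([r1, r2, r1, r4, r2, r1, r4], [r1, r2, r1, r1, r4, r4, r4])

/-!
Write the first duplication as `u v w ↦ u v v w` and let the second one copy the block `q` of
`u v v w`. If `q` lies inside `u v` or inside `v w`, it already occurs in `x`, and the two
duplications commute: duplicating `q` first keeps an intact copy of `v` next to it (as
`|v| ≤ |q|`), which is then duplicated. Otherwise `q = s₁ s₂` straddles the boundary between the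
two copies of `v`; since `|v| < |q| ≤ 3` only five configurations remain, and each is realised on a
window of at most two letters by three duplications of lengths at most `2`.
-/

variable {α : Type*}

theorem List.exists_eq_append_of_append_eq_append {A B C D : List α} (h : A ++ B = C ++ D)
    (hl : C.length ≤ A.length) : ∃ m, A = C ++ m ∧ D = m ++ B := by
  obtain ⟨m, rfl⟩ :=
    List.prefix_of_prefix_length_le (List.prefix_append C D) (h ▸ List.prefix_append A B) hl
  exact ⟨m, rfl, by simpa using h.symm⟩

theorem DupAt.append_append {i k : ℕ} {x y : List α} (P S : List α) (h : DupAt i k x y) :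
    DupAt (P.length + i) k (P ++ x ++ S) (P ++ y ++ S) := by
  obtain ⟨u, v, w, rfl, rfl, rfl, rfl⟩ := h
  exact ⟨P ++ u, v, w ++ S, by simp, by simp, rfl, by simp⟩

def NonincDupChain (k : ℕ) (x y : List α) : Prop :=
  ∃ (t : ℕ) (ℓ j : ℕ → ℕ) (ws : ℕ → List α),
    1 ≤ t ∧ ws 0 = x ∧ ws t = y ∧
    (∀ s < t, DupAt (j s) (ℓ s) (ws s) (ws (s + 1))) ∧
    (∀ s < t, 1 ≤ ℓ s ∧ ℓ s ≤ k) ∧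
    (∀ s s', s ≤ s' → s' < t → ℓ s' ≤ ℓ s)

namespace NonincDupChain

variable {k j ℓ : ℕ} {x y z u v w p q r s₁ s₂ : List α}

theorem single (h : DupAt j ℓ x y) (hℓ : 1 ≤ ℓ) (hℓk : ℓ ≤ k) : NonincDupChain k x y :=
  ⟨1, fun _ => ℓ, fun _ => j, fun s => if s = 0 then x else y, le_rfl, rfl, rfl,
    fun s hs => by simpa [Nat.lt_one_iff.mp hs] using h, fun _ _ => ⟨hℓ, hℓk⟩,
    fun _ _ _ _ => le_rfl⟩

theorem cons (hxy : DupAt j ℓ x y) (hℓ : 1 ≤ ℓ) (hℓk : ℓ ≤ k) (hyz : NonincDupChain ℓ y z) :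
    NonincDupChain k x z := by
  obtain ⟨t, ℓs, js, ws, -, h0, ht, hdup, hbd, hanti⟩ := hyz
  refine ⟨t + 1, fun s => if s = 0 then ℓ else ℓs (s - 1),
    fun s => if s = 0 then j else js (s - 1), fun s => if s = 0 then x else ws (s - 1),
    by omega, rfl, by simpa using ht, ?_, ?_, ?_⟩
  · rintro (_ | s) hs
    · simpa [h0] using hxy
    · simpa using hdup s (by omega)
  · rintro (_ | s) hs
    · exact ⟨hℓ, hℓk⟩
    · have := hbd s (by omega)
      simp only [Nat.add_one_ne_zero, ↓reduceIte, Nat.add_sub_cancel]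
      omega
  · rintro (_ | s) (_ | s') hss' hs'
    · exact le_rfl
    · simpa using (hbd s' (by omega)).2
    · omega
    · simpa using hanti s s' (by omega) (by omega)

theorem append_append (P S : List α) (h : NonincDupChain k x y) :
    NonincDupChain k (P ++ x ++ S) (P ++ y ++ S) := by
  obtain ⟨t, ℓ, j, ws, ht, h0, ht', hdup, hbd, hanti⟩ := h
  exact ⟨t, ℓ, fun s => P.length + j s, fun s => P ++ ws s ++ S, ht, by simp [h0], by simp [ht'],
    fun s hs => (hdup s hs).append_append P S, hbd, hanti⟩


theorem of_block_left (hz : u ++ v ++ v ++ w = p ++ q ++ r)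
    (hpos : p.length + q.length ≤ u.length + v.length) (hv : 1 ≤ v.length)
    (hvq : v.length ≤ q.length) (hqk : q.length ≤ k) :
    NonincDupChain k (u ++ v ++ w) (p ++ q ++ q ++ r) := by
  obtain ⟨m, huv, rfl⟩ : ∃ m, u ++ v = p ++ q ++ m ∧ r = m ++ (v ++ w) :=
    List.exists_eq_append_of_append_eq_append (by simpa using hz) (by simpa using hpos)
  have hlen : u.length + v.length = p.length + (q.length + m.length) := by
    simpa using congrArg List.length huv
  obtain ⟨e, -, hqm⟩ : ∃ e, u = p ++ e ∧ q ++ m = e ++ v :=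
    List.exists_eq_append_of_append_eq_append (by simpa using huv) (by omega)
  have hx : u ++ v ++ w = p ++ q ++ (m ++ w) := by simp [huv]
  have hy : p ++ q ++ q ++ (m ++ w) = p ++ q ++ e ++ v ++ w := by
    simp only [List.append_assoc, ← hqm]
  rw [hx]
  refine cons ⟨p, q, m ++ w, rfl, rfl, rfl, rfl⟩ (by omega) hqk
    (single ⟨p ++ q ++ e, v, w, hy, rfl, rfl, ?_⟩ hv hvq)
  simp only [List.append_assoc, ← hqm]

theorem of_block_right (hz : u ++ v ++ v ++ w = p ++ q ++ r)
    (hpos : u.length + v.length ≤ p.length) (hv : 1 ≤ v.length)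
    (hvq : v.length ≤ q.length) (hqk : q.length ≤ k) :
    NonincDupChain k (u ++ v ++ w) (p ++ q ++ q ++ r) := by
  obtain ⟨m, rfl, hvw⟩ : ∃ m, p = u ++ v ++ m ∧ v ++ w = m ++ (q ++ r) :=
    List.exists_eq_append_of_append_eq_append (by simpa using hz.symm) (by simpa using hpos)
  obtain ⟨f, hmq, -⟩ : ∃ f, m ++ q = v ++ f ∧ w = f ++ r :=
    List.exists_eq_append_of_append_eq_append (by simpa using hvw.symm)
      (by simp only [List.length_append]; omega)
  have hx : u ++ v ++ w = u ++ m ++ q ++ r := by simp [hvw]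
  have hy : u ++ m ++ q ++ q ++ r = u ++ v ++ (f ++ q ++ r) := by
    simp only [List.append_assoc, hmq]
  rw [hx]
  refine cons ⟨u ++ m, q, r, rfl, rfl, rfl, rfl⟩ (by omega) hqk
    (single ⟨u, v, f ++ q ++ r, hy, rfl, rfl, ?_⟩ hv hvq)
  simp only [List.append_assoc, hmq]


theorem of_straddle_singleton {c : α} (hl : u ++ [c] = p ++ s₁) (hr : [c] ++ w = s₂ ++ r)
    (h₁ : 1 ≤ s₁.length) (h₂ : 1 ≤ s₂.length) (h₃ : s₁.length + s₂.length ≤ 3) (hk : 2 ≤ k) :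
    NonincDupChain k (u ++ [c] ++ w) (p ++ (s₁ ++ s₂) ++ (s₁ ++ s₂) ++ r) := by
  rcases (by omega : s₁.length = 1 ∧ s₂.length = 1 ∨ s₁.length = 1 ∧ s₂.length = 2 ∨
    s₁.length = 2 ∧ s₂.length = 1) with ⟨h₁, h₂⟩ | ⟨h₁, h₂⟩ | ⟨h₁, h₂⟩
  · obtain ⟨a, rfl⟩ := List.length_eq_one_iff.mp h₁
    obtain ⟨b, rfl⟩ := List.length_eq_one_iff.mp h₂
    obtain ⟨rfl, rfl⟩ := List.append_singleton_inj.mp hl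
    obtain ⟨rfl, rfl⟩ : c = b ∧ w = r := by simpa using hr
    have : NonincDupChain k [c] [c, c, c, c] :=
      cons ⟨[], [c], [], rfl, rfl, rfl, rfl⟩ le_rfl (by omega) <|
      cons ⟨[], [c], [c], rfl, rfl, rfl, rfl⟩ le_rfl le_rfl <|
      single ⟨[], [c], [c, c], rfl, rfl, rfl, rfl⟩ le_rfl le_rfl
    simpa using this.append_append u w
  · obtain ⟨a, rfl⟩ := List.length_eq_one_iff.mp h₁
    obtain ⟨b, d, rfl⟩ := List.length_eq_two.mp h₂
    obtain ⟨rfl, rfl⟩ := List.append_singleton_inj.mp hl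
    obtain ⟨rfl, rfl⟩ : c = b ∧ w = d :: r := by simpa using hr
    have : NonincDupChain k [c, d] [c, c, d, c, c, d] :=
      cons ⟨[], [c, d], [], rfl, rfl, rfl, rfl⟩ (by simp) (by simpa using hk) <|
      cons ⟨[], [c], [d, c, d], rfl, rfl, rfl, rfl⟩ le_rfl (by simp) <|
      single ⟨[c, c, d], [c], [d], rfl, rfl, rfl, rfl⟩ le_rfl le_rfl
    simpa using this.append_append u r
  · obtain ⟨e, a, rfl⟩ := List.length_eq_two.mp h₁
    obtain ⟨b, rfl⟩ := List.length_eq_one_iff.mp h₂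
    obtain ⟨rfl, rfl⟩ := List.append_singleton_inj.mp (hl.trans (List.append_assoc p [e] [a]).symm)
    obtain ⟨rfl, rfl⟩ : c = b ∧ w = r := by simpa using hr
    have : NonincDupChain k [e, c] [e, c, c, e, c, c] :=
      cons ⟨[], [e, c], [], rfl, rfl, rfl, rfl⟩ (by simp) (by simpa using hk) <|
      cons ⟨[e], [c], [e, c], rfl, rfl, rfl, rfl⟩ le_rfl (by simp) <|
      single ⟨[e, c, c, e], [c], [], rfl, rfl, rfl, rfl⟩ le_rfl le_rfl
    simpa using this.append_append p w

theorem of_straddle_pair {c d : α} (hl : u ++ [c, d] = p ++ s₁) (hr : [c, d] ++ w = s₂ ++ r)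
    (h₁ : 1 ≤ s₁.length) (h₂ : 1 ≤ s₂.length) (h₃ : s₁.length + s₂.length = 3) (hk : 2 ≤ k) :
    NonincDupChain k (u ++ [c, d] ++ w) (p ++ (s₁ ++ s₂) ++ (s₁ ++ s₂) ++ r) := by
  rcases (by omega : s₁.length = 1 ∧ s₂.length = 2 ∨ s₁.length = 2 ∧ s₂.length = 1)
    with ⟨h₁, h₂⟩ | ⟨h₁, h₂⟩
  · obtain ⟨a, rfl⟩ := List.length_eq_one_iff.mp h₁
    obtain ⟨b, e, rfl⟩ := List.length_eq_two.mp h₂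
    obtain ⟨rfl, rfl⟩ := List.append_singleton_inj.mp ((List.append_assoc u [c] [d]).trans hl)
    obtain ⟨rfl, rfl, rfl⟩ : c = b ∧ d = e ∧ w = r := by simpa using hr
    have : NonincDupChain k [c, d] [c, d, c, d, d, c, d] :=
      cons ⟨[], [c, d], [], rfl, rfl, rfl, rfl⟩ (by simp) (by simpa using hk) <|
      cons ⟨[c], [d, c], [d], rfl, rfl, rfl, rfl⟩ (by simp) le_rfl <|
      single ⟨[c, d, c], [d], [c, d], rfl, rfl, rfl, rfl⟩ le_rfl (by simp)
    simpa using this.append_append u w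
  · obtain ⟨a, b, rfl⟩ := List.length_eq_two.mp h₁
    obtain ⟨e, rfl⟩ := List.length_eq_one_iff.mp h₂
    obtain ⟨rfl, hcd⟩ := List.append_inj' hl rfl
    obtain ⟨rfl, rfl⟩ : c = a ∧ d = b := by simpa using hcd
    obtain ⟨rfl, rfl⟩ : c = e ∧ d :: w = r := by simpa using hr
    have : NonincDupChain k [c, d] [c, d, c, c, d, c, d] :=
      cons ⟨[], [c, d], [], rfl, rfl, rfl, rfl⟩ (by simp) (by simpa using hk) <|
      cons ⟨[c, d], [c, d], [], rfl, rfl, rfl, rfl⟩ (by simp) le_rfl <|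
      single ⟨[c, d], [c], [d, c, d], rfl, rfl, rfl, rfl⟩ le_rfl (by simp)
    simpa using this.append_append u w

theorem of_block_straddle (hz : u ++ v ++ v ++ w = p ++ q ++ r)
    (hleft : p.length < u.length + v.length) (hright : u.length + v.length < p.length + q.length)
    (hv : 1 ≤ v.length) (hvq : v.length < q.length) (hq : q.length ≤ 3) (hk : 2 ≤ k) :
    NonincDupChain k (u ++ v ++ w) (p ++ q ++ q ++ r) := by
  obtain ⟨s₁, hl, hqr⟩ : ∃ s₁, u ++ v = p ++ s₁ ∧ q ++ r = s₁ ++ (v ++ w) :=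
    List.exists_eq_append_of_append_eq_append (by simpa using hz)
      (by simp only [List.length_append]; omega)
  have hlen : u.length + v.length = p.length + s₁.length := by
    simpa using congrArg List.length hl
  obtain ⟨s₂, rfl, hr⟩ : ∃ s₂, q = s₁ ++ s₂ ∧ v ++ w = s₂ ++ r :=
    List.exists_eq_append_of_append_eq_append hqr (by omega)
  simp only [List.length_append] at hright hvq hq
  rcases (by omega : v.length = 1 ∨ v.length = 2) with hv | hv
  · obtain ⟨c, rfl⟩ := List.length_eq_one_iff.mp hv
    exact of_straddle_singleton hl hr (by omega) (by omega) hq hk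
  · obtain ⟨c, d, rfl⟩ := List.length_eq_two.mp hv
    exact of_straddle_pair hl hr (by omega) (by omega) (by omega) hk

end NonincDupChain

theorem reorder_duplications_general (q : ℕ) (k₁ k₂ i₁ i₂ : ℕ)
    (hk₁ : 1 ≤ k₁) (h₁₂ : k₁ < k₂) (hk₂ : k₂ ≤ 3)
    (x z x' : List (Fin q)) (h₁ : DupAt i₁ k₁ x z) (h₂ : DupAt i₂ k₂ z x') :
    ∃ (t : ℕ) (ℓ j : ℕ → ℕ) (ws : ℕ → List (Fin q)),
      1 ≤ t ∧ ws 0 = x ∧ ws t = x' ∧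
      (∀ s < t, DupAt (j s) (ℓ s) (ws s) (ws (s + 1))) ∧
      (∀ s < t, 1 ≤ ℓ s ∧ ℓ s ≤ 3) ∧
      (∀ s s', s ≤ s' → s' < t → ℓ s' ≤ ℓ s) := by
  obtain ⟨u, v, w, rfl, rfl, rfl, rfl⟩ := h₁
  obtain ⟨p, b, r, hz, rfl, rfl, rfl⟩ := h₂
  rcases le_or_gt (p.length + b.length) (u.length + v.length) with hleft | hleft
  · exact NonincDupChain.of_block_left hz hleft hk₁ h₁₂.le hk₂
  rcases le_or_gt (u.length + v.length) p.length with hright | hright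
  · exact NonincDupChain.of_block_right hz hright hk₁ h₁₂.le hk₂
  exact NonincDupChain.of_block_straddle hz hright hleft hk₁ h₁₂ hk₂ (by norm_num)

/-- Lemma 5: two tandem duplications of lengths `k₁ < k₂ ≤ 3` can be
replaced by a sequence of tandem duplications of nonincreasing lengths in `{1, 2, 3}`. -/
theorem reorder_duplications (q : ℕ) (hq : 2 ≤ q) (k₁ k₂ i₁ i₂ : ℕ)
    (hk₁ : 1 ≤ k₁) (h₁₂ : k₁ < k₂) (hk₂ : k₂ ≤ 3)
    (x z x' : List (Fin q)) (h₁ : DupAt i₁ k₁ x z) (h₂ : DupAt i₂ k₂ z x') :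
    ∃ (t : ℕ) (ℓ j : ℕ → ℕ) (ws : ℕ → List (Fin q)),
      1 ≤ t ∧ ws 0 = x ∧ ws t = x' ∧
      (∀ s < t, DupAt (j s) (ℓ s) (ws s) (ws (s + 1))) ∧
      (∀ s < t, 1 ≤ ℓ s ∧ ℓ s ≤ 3) ∧
      (∀ s s', s ≤ s' → s' < t → ℓ s' ≤ ℓ s) :=
  reorder_duplications_general q k₁ k₂ i₁ i₂ hk₁ h₁₂ hk₂ x z x' h₁ h₂
end

section
/- Let q ≥ 2 and let x, y be words over Σ_q. Then x and y are ≤3-confusable if and only if there exist words x' and y' such that x ⇒*_{3_d} x', y ⇒*_{3_d} y', and R_{≤2}(x') = R_{≤2}(y'). -/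
/-!
A duplication of length 3 either copies three distinct symbols or can be simulated by two
duplications of length at most 2. A distinct-triple duplication can be moved in front of a
duplication of length at most 2: a square `vv` with `|v| ≤ 2` cannot meet a block of three distinct
symbols on both sides of its centre. Hence every `≤3`-descendant of `x` is a `≤2`-descendant of a
`3_d`-descendant of `x`. The theorem follows because `≤2`-duplication is confluent in both
directions: roots are unique, and two words with a common root have a common descendant.
-/

open Relation

variable {α : Type*}

namespace List

theorem exists_eq_append_of_append_eq_append_s3 {X Y Z W : List α} (h : X ++ Y = Z ++ W)
    (hl : X.length ≤ Z.length) : ∃ M, Z = X ++ M ∧ Y = M ++ W := by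
  rcases append_eq_append_iff.mp h with ⟨M, hZ, hY⟩ | ⟨M, rfl, hW⟩
  · exact ⟨M, hZ, hY⟩
  · obtain rfl : M = [] := by simpa using hl
    exact ⟨[], by simp, by simpa using hW.symm⟩

theorem getLast_eq_of_append_eq_append {P V Q a : List α} (h : P ++ V = Q ++ a) (hV : V ≠ [])
    (ha : a ≠ []) : V.getLast hV = a.getLast ha := by
  rw [← getLast_append_of_ne_nil (l := P) (by simp [hV]) hV,
    ← getLast_append_of_ne_nil (l := Q) (by simp [ha]) ha]
  exact getLast_congr _ _ h

theorem exists_mem_mem_of_overlap {P Q V S W a m : List α} (hV : V ≠ []) (ha : a ≠ [])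
    (hm : m ≠ []) (hleft : P ++ V = Q ++ a) (hright : V ++ S = m ++ W)
    (hlen : V.length < a.length + m.length) : ∃ x ∈ a, x ∈ m := by
  rcases append_eq_append_iff.mp hright with ⟨t, rfl, -⟩ | ⟨t, rfl, -⟩
  · refine ⟨V.getLast hV, ?_, mem_append_left _ (getLast_mem hV)⟩
    rw [getLast_eq_of_append_eq_append hleft hV ha]
    exact getLast_mem ha
  · have hQa : Q ++ a = (P ++ m) ++ t := by simp [← hleft]
    obtain ⟨M, hPm, rfl⟩ := exists_eq_append_of_append_eq_append_s3 hQa (by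
      have := congrArg length hQa; simp at this hlen ⊢; omega)
    have hM : M ≠ [] := by rintro rfl; simp at hlen; omega
    refine ⟨m.getLast hm, ?_, getLast_mem hm⟩
    rw [getLast_eq_of_append_eq_append hPm hm hM]
    exact mem_append_left _ (getLast_mem hM)

end List

open List

theorem dupLE_square {k : ℕ} (u v w : List α) (h1 : 1 ≤ v.length) (h2 : v.length ≤ k) :
    DupLE k (u ++ v ++ w) (u ++ v ++ v ++ w) :=
  ⟨u, v, w, rfl, h1, h2, rfl⟩

theorem DupLE.mono {k l : ℕ} (hkl : k ≤ l) {x y : List α} (h : DupLE k x y) : DupLE l x y := by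
  obtain ⟨u, v, w, hx, h1, h2, hy⟩ := h
  exact ⟨u, v, w, hx, h1, h2.trans hkl, hy⟩

theorem DupLE.append_left {k : ℕ} (p : List α) {x y : List α} (h : DupLE k x y) :
    DupLE k (p ++ x) (p ++ y) := by
  obtain ⟨u, v, w, rfl, h1, h2, rfl⟩ := h
  exact ⟨p ++ u, v, w, by simp, h1, h2, by simp⟩

theorem DerivLE.mono {k l : ℕ} (hkl : k ≤ l) {x y : List α} (h : DerivLE k x y) :
    DerivLE l x y :=
  ReflTransGen.mono (fun _ _ => DupLE.mono hkl) _ _ h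

theorem DerivD.derivLE {k : ℕ} (hk : 0 < k) {x y : List α} (h : DerivD k x y) : DerivLE k x y :=
  ReflTransGen.mono (fun _ _ ⟨u, v, w, hx, hv, _, hy⟩ => ⟨u, v, w, hx, hv ▸ hk, hv.le, hy⟩) _ _ h

theorem dupLE_two_diamond_of_append_eq {v₁ w₁ m v₂ w₂ : List α} (h₁ : 1 ≤ v₁.length)
    (h₁' : v₁.length ≤ 2) (h₂ : 1 ≤ v₂.length) (h₂' : v₂.length ≤ 2)
    (h : v₁ ++ w₁ = m ++ (v₂ ++ w₂)) :
    ∃ d, DupLE 2 (v₁ ++ v₁ ++ w₁) d ∧ DupLE 2 (m ++ v₂ ++ v₂ ++ w₂) d := by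
  rcases append_eq_append_iff.mp h with ⟨t, rfl, rfl⟩ | ⟨t, rfl, ht⟩
  · exact ⟨v₁ ++ v₁ ++ t ++ v₂ ++ v₂ ++ w₂, ⟨v₁ ++ v₁ ++ t, v₂, w₂, by simp, h₂, h₂', by simp⟩,
      ⟨[], v₁, t ++ v₂ ++ v₂ ++ w₂, by simp, h₁, h₁', by simp⟩⟩
  rcases append_eq_append_iff.mp ht with ⟨r, rfl, rfl⟩ | ⟨r, rfl, rfl⟩
  · -- `v₂` lies inside `v₁ = m ++ v₂ ++ r`, so one of `m`, `r` is empty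
    have hmr : m = [] ∨ r = [] := by
      simp only [length_append] at h₁'
      rcases m with _ | ⟨_, _⟩ <;> rcases r with _ | ⟨_, _⟩ <;> simp at h₁' ⊢; omega
    rcases hmr with rfl | rfl
    · exact ⟨v₂ ++ v₂ ++ r ++ v₂ ++ r ++ w₁,
        ⟨[], v₂, r ++ v₂ ++ r ++ w₁, by simp, h₂, h₂', by simp⟩,
        ⟨v₂, v₂ ++ r, w₁, by simp, by simpa using h₁, by simpa using h₁', by simp⟩⟩
    · exact ⟨m ++ v₂ ++ m ++ v₂ ++ v₂ ++ w₁,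
        ⟨m ++ v₂ ++ m, v₂, w₁, by simp, h₂, h₂', by simp⟩,
        ⟨[], m ++ v₂, v₂ ++ w₁, by simp, by simpa using h₁, by simpa using h₁', by simp⟩⟩
  · exact ⟨m ++ t ++ m ++ t ++ r ++ t ++ r ++ w₂,
      ⟨m ++ t ++ m, t ++ r, w₂, by simp, h₂, h₂', by simp⟩,
      ⟨[], m ++ t, r ++ t ++ r ++ w₂, by simp, h₁, h₁', by simp⟩⟩

theorem dupLE_two_diamond {a b c : List α} (hb : DupLE 2 a b) (hc : DupLE 2 a c) :
    ∃ d, DupLE 2 b d ∧ DupLE 2 c d := by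
  obtain ⟨u₁, v₁, w₁, rfl, h₁, h₁', rfl⟩ := hb
  obtain ⟨u₂, v₂, w₂, ha, h₂, h₂', rfl⟩ := hc
  rcases append_eq_append_iff.mp (by simpa using ha : u₁ ++ (v₁ ++ w₁) = u₂ ++ (v₂ ++ w₂))
    with ⟨m, rfl, he⟩ | ⟨m, rfl, he⟩
  · obtain ⟨d, hbd, hcd⟩ := dupLE_two_diamond_of_append_eq h₁ h₁' h₂ h₂' he
    exact ⟨u₁ ++ d, by simpa using hbd.append_left u₁, by simpa using hcd.append_left u₁⟩
  · obtain ⟨d, hcd, hbd⟩ := dupLE_two_diamond_of_append_eq h₂ h₂' h₁ h₁' he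
    exact ⟨u₂ ++ d, by simpa using hbd.append_left u₂, by simpa using hcd.append_left u₂⟩

theorem derivLE_two_join {a b c : List α} (hb : DerivLE 2 a b) (hc : DerivLE 2 a c) :
    Join (DerivLE 2) b c :=
  church_rosser (fun _ _ _ hb hc =>
    let ⟨d, hbd, hcd⟩ := dupLE_two_diamond hb hc
    ⟨d, .single hbd, .single hcd⟩) hb hc

-- `flip (DupLE 2) x y`: `y` arises from `x` by removing one copy of a square `vv` with `|v| ≤ 2`.
theorem reflGen_flip_dupLE_append_left {k : ℕ} (p : List α) {x y : List α}
    (h : ReflGen (flip (DupLE k)) x y) : ReflGen (flip (DupLE k)) (p ++ x) (p ++ y) := by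
  rcases h with _ | h
  · exact .refl
  · exact .single (h.append_left p)

theorem dedup_join_of_overlap_single {x : α} {s₁ m v s₂ : List α} (hm : m.length ≤ 1)
    (hv : 1 ≤ v.length) (hv' : v.length ≤ 2) (h : x :: x :: s₁ = m ++ v ++ v ++ s₂) :
    ∃ d, ReflGen (flip (DupLE 2)) (x :: s₁) d ∧ ReflGen (flip (DupLE 2)) (m ++ v ++ s₂) d := by
  rcases m with _ | ⟨a, _ | ⟨_, _⟩⟩ <;> rcases v with _ | ⟨c, _ | ⟨e, _ | ⟨_, _⟩⟩⟩ <;>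
    simp at hm hv hv' h <;> casesm* _ ∧ _ <;> subst_vars
  · exact ⟨_, .refl, .refl⟩
  · exact ⟨e :: e :: s₂, .single (dupLE_square [] [e] (e :: s₂) le_rfl one_le_two), .refl⟩
  · exact ⟨_, .refl, .refl⟩
  · exact ⟨c :: e :: s₂, .single (dupLE_square [] [c, e] s₂ one_le_two le_rfl),
      .single (dupLE_square [] [c] (e :: s₂) le_rfl one_le_two)⟩

theorem dedup_join_of_overlap_pair {x y : α} {s₁ m v s₂ : List α} (hm : m.length ≤ 3)
    (hv : 1 ≤ v.length) (hv' : v.length ≤ 2) (h : x :: y :: x :: y :: s₁ = m ++ v ++ v ++ s₂) :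
    ∃ d, ReflGen (flip (DupLE 2)) (x :: y :: s₁) d ∧ ReflGen (flip (DupLE 2)) (m ++ v ++ s₂) d := by
  rcases m with _ | ⟨a, _ | ⟨b, _ | ⟨b', _ | ⟨_, _⟩⟩⟩⟩ <;>
    rcases v with _ | ⟨c, _ | ⟨e, _ | ⟨_, _⟩⟩⟩ <;>
    simp at hm hv hv' h <;> (try omega) <;> casesm* _ ∧ _ <;> subst_vars
  · exact ⟨_, .refl, .single (dupLE_square [] [c] (c :: s₁) le_rfl one_le_two)⟩
  · exact ⟨_, .refl, .refl⟩
  · exact ⟨_, .refl, .single (dupLE_square [] [c] (c :: s₁) le_rfl one_le_two)⟩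
  · exact ⟨_, .refl, .refl⟩
  · exact ⟨_, .refl, .single (dupLE_square [] [c] (c :: s₂) le_rfl one_le_two)⟩
  · exact ⟨_, .refl, .refl⟩
  · exact ⟨b' :: c :: s₂, .single (dupLE_square [b'] [c] s₂ le_rfl one_le_two),
      .single (dupLE_square [] [b', c] s₂ one_le_two le_rfl)⟩
  · exact ⟨b' :: c :: e :: s₂, .single (dupLE_square [b'] [c, e] s₂ one_le_two le_rfl),
      .single (dupLE_square [] [b', c] (e :: s₂) one_le_two le_rfl)⟩

theorem dedup_join_of_append_eq {v₁ s₁ m v₂ s₂ : List α} (h₁ : 1 ≤ v₁.length) (h₁' : v₁.length ≤ 2)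
    (h₂ : 1 ≤ v₂.length) (h₂' : v₂.length ≤ 2) (h : v₁ ++ v₁ ++ s₁ = m ++ v₂ ++ v₂ ++ s₂) :
    ∃ d, ReflGen (flip (DupLE 2)) (v₁ ++ s₁) d ∧ ReflGen (flip (DupLE 2)) (m ++ v₂ ++ s₂) d := by
  by_cases hm : 2 * v₁.length ≤ m.length
  · obtain ⟨t, rfl, rfl⟩ := exists_eq_append_of_append_eq_append_s3
      (by simpa using h : (v₁ ++ v₁) ++ s₁ = m ++ (v₂ ++ v₂ ++ s₂)) (by simpa [two_mul] using hm)
    exact ⟨v₁ ++ t ++ v₂ ++ s₂, .single (by simpa [flip] using dupLE_square (v₁ ++ t) v₂ s₂ h₂ h₂'),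
      .single (by simpa [flip] using dupLE_square [] v₁ (t ++ v₂ ++ s₂) h₁ h₁')⟩
  rcases v₁ with _ | ⟨x, _ | ⟨y, _ | ⟨_, _⟩⟩⟩
  · simp at h₁
  · exact dedup_join_of_overlap_single (by simp at hm; omega) h₂ h₂' (by simpa using h)
  · exact dedup_join_of_overlap_pair (by simp at hm; omega) h₂ h₂' (by simpa using h)
  · simp at h₁'

theorem dedup_join {a b c : List α} (hb : DupLE 2 b a) (hc : DupLE 2 c a) :
    ∃ d, ReflGen (flip (DupLE 2)) b d ∧ ReflGen (flip (DupLE 2)) c d := by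
  obtain ⟨p₁, v₁, s₁, rfl, h₁, h₁', ha⟩ := hb
  obtain ⟨p₂, v₂, s₂, rfl, h₂, h₂', rfl⟩ := hc
  rcases append_eq_append_iff.mp
      (by simpa using ha.symm : p₁ ++ (v₁ ++ v₁ ++ s₁) = p₂ ++ (v₂ ++ v₂ ++ s₂))
    with ⟨m, rfl, he⟩ | ⟨m, rfl, he⟩
  · obtain ⟨d, hbd, hcd⟩ := dedup_join_of_append_eq h₁ h₁' h₂ h₂' (by simpa using he)
    exact ⟨p₁ ++ d, by simpa using reflGen_flip_dupLE_append_left p₁ hbd,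
      by simpa using reflGen_flip_dupLE_append_left p₁ hcd⟩
  · obtain ⟨d, hcd, hbd⟩ := dedup_join_of_append_eq h₂ h₂' h₁ h₁' (by simpa using he)
    exact ⟨p₂ ++ d, by simpa using reflGen_flip_dupLE_append_left p₂ hbd,
      by simpa using reflGen_flip_dupLE_append_left p₂ hcd⟩

theorem IrredLE.eq_of_derivLE {k : ℕ} {r d : List α} (hr : IrredLE k r) (h : DerivLE k d r) :
    d = r := by
  rcases h.cases_tail with rfl | ⟨c, -, u, v, w, -, h₁, h₂, hrc⟩
  · rfl
  · exact absurd ⟨u, v, w, h₁, h₂, hrc⟩ hr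

theorem IrredLE.eq_of_derivLE_two {x r₁ r₂ : List α} (h₁ : IrredLE 2 r₁) (h₂ : IrredLE 2 r₂)
    (d₁ : DerivLE 2 r₁ x) (d₂ : DerivLE 2 r₂ x) : r₁ = r₂ := by
  obtain ⟨d, hd₁, hd₂⟩ := church_rosser (r := flip (DupLE 2))
    (fun _ _ _ hb hc =>
      let ⟨d, hbd, hcd⟩ := dedup_join hb hc
      ⟨d, hbd, hcd.to_reflTransGen⟩)
    (reflTransGen_swap.mpr d₁) (reflTransGen_swap.mpr d₂)
  rw [← h₁.eq_of_derivLE (reflTransGen_swap.mp hd₁), ← h₂.eq_of_derivLE (reflTransGen_swap.mp hd₂)]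

theorem exists_irredLE_derivLE (k : ℕ) (x : List α) : ∃ r, IrredLE k r ∧ DerivLE k r x := by
  by_cases hx : IrredLE k x
  · exact ⟨x, hx, .refl⟩
  · obtain ⟨u, v, w, h₁, h₂, hx⟩ := not_not.mp hx
    obtain ⟨r, hr, hd⟩ := exists_irredLE_derivLE k (u ++ v ++ w)
    exact ⟨r, hr, hd.tail ⟨u, v, w, rfl, h₁, h₂, hx⟩⟩
termination_by x.length
decreasing_by rw [hx]; simp; omega

theorem rootsLE_two_eq_of_derivLE {a b : List α} (h : DerivLE 2 a b) :
    RootsLE 2 a = RootsLE 2 b := by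
  ext r
  refine ⟨fun ⟨hr, hra⟩ => ⟨hr, hra.trans h⟩, fun ⟨hr, hrb⟩ => ?_⟩
  obtain ⟨r', hr', hr'a⟩ := exists_irredLE_derivLE 2 a
  obtain rfl := hr.eq_of_derivLE_two hr' hrb (hr'a.trans h)
  exact ⟨hr, hr'a⟩

theorem derivLE_two_of_not_nodup (u w : List α) {v : List α} (hv : v.length = 3)
    (hnd : ¬ v.Nodup) : DerivLE 2 (u ++ v ++ w) (u ++ v ++ v ++ w) := by
  rcases v with _ | ⟨p, _ | ⟨q, _ | ⟨r, _ | ⟨_, _⟩⟩⟩⟩ <;> simp at hv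
  have : p = q ∨ p = r ∨ q = r := by
    by_contra! hne
    exact hnd (by simp [hne.1, hne.2.1, hne.2.2])
  rcases this with rfl | rfl | rfl
  · exact .head (by simpa using dupLE_square (u ++ [p]) [p, r] w one_le_two le_rfl)
      (.single (by simpa using dupLE_square (u ++ [p, p, r]) [p] (r :: w) le_rfl one_le_two))
  · exact .head (by simpa using dupLE_square u [p, q] (p :: w) one_le_two le_rfl)
      (.single (by simpa using dupLE_square (u ++ [p, q]) [p] (q :: p :: w) le_rfl one_le_two))
  · exact .head (by simpa using dupLE_square u [p, q] (q :: w) one_le_two le_rfl)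
      (.single (by simpa using dupLE_square (u ++ [p]) [q] (p :: q :: q :: w) le_rfl one_le_two))

theorem DupLE.dupD_or_derivLE_two {a b : List α} (h : DupLE 3 a b) :
    DupD 3 a b ∨ DerivLE 2 a b := by
  obtain ⟨u, v, w, rfl, h₁, h₃, rfl⟩ := h
  by_cases h₂ : v.length ≤ 2
  · exact .inr (.single (dupLE_square u v w h₁ h₂))
  by_cases hnd : v.Nodup
  · exact .inl ⟨u, v, w, rfl, by omega, hnd, rfl⟩
  · exact .inr (derivLE_two_of_not_nodup u w (by omega) hnd)

theorem commute_dupD_of_before_centre {P V S Q T m : List α} (hV : 1 ≤ V.length)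
    (hV' : V.length ≤ 2) (hT : T.length = 3) (hTn : T.Nodup) (h : P ++ V = Q ++ T ++ m) :
    ∃ d, DupD 3 (P ++ V ++ S) d ∧ DupLE 2 d (Q ++ T ++ T ++ m ++ V ++ S) := by
  obtain ⟨Y, rfl, hY⟩ := exists_eq_append_of_append_eq_append_s3
    (by simpa using h.symm : Q ++ (T ++ m) = P ++ V)
    (by have := congrArg length h; simp at this; omega)
  refine ⟨Q ++ T ++ T ++ m ++ S, ⟨Q, T, m ++ S, ?_, hT, hTn, by simp⟩, ?_⟩
  · rw [append_assoc Q Y V, ← hY]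
    simp
  · rw [show Q ++ T ++ T ++ m = Q ++ T ++ Y ++ V by simp [← hY]]
    exact dupLE_square _ V S hV hV'

theorem commute_dupD_of_after_centre {P V S z T W : List α} (hV : 1 ≤ V.length)
    (hV' : V.length ≤ 2) (hT : T.length = 3) (hTn : T.Nodup) (h : V ++ S = z ++ T ++ W) :
    ∃ d, DupD 3 (P ++ V ++ S) d ∧ DupLE 2 d (P ++ V ++ z ++ T ++ T ++ W) := by
  obtain ⟨Y, hY, -⟩ := exists_eq_append_of_append_eq_append_s3
    (by simpa using h : V ++ S = (z ++ T) ++ W) (by simp; omega)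
  refine ⟨P ++ z ++ T ++ T ++ W, ⟨P ++ z, T, W, ?_, hT, hTn, by simp⟩, ?_⟩
  · rw [append_assoc P V S, h]
    simp
  · rw [show P ++ z ++ T = P ++ V ++ Y by simp [hY],
      show P ++ V ++ z ++ T = P ++ V ++ V ++ Y by simp [hY]]
    simpa using dupLE_square P V (Y ++ T ++ W) hV hV'

theorem DupLE.commute_dupD {a b c : List α} (h₁ : DupLE 2 a b) (h₂ : DupD 3 b c) :
    ∃ d, DupD 3 a d ∧ DupLE 2 d c := by
  obtain ⟨P, V, S, rfl, hV, hV', rfl⟩ := h₁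
  obtain ⟨Q, T, W, hb, hT, hTn, rfl⟩ := h₂
  rcases append_eq_append_iff.mp (by simpa using hb : (P ++ V) ++ (V ++ S) = Q ++ (T ++ W))
    with ⟨z, rfl, hVS⟩ | ⟨z, hPV, hTW⟩
  · simpa using commute_dupD_of_after_centre (P := P) hV hV' hT hTn (by simpa using hVS)
  rcases append_eq_append_iff.mp hTW with ⟨m, rfl, rfl⟩ | ⟨n, rfl, hVS⟩
  · simpa using commute_dupD_of_before_centre (S := S) hV hV' hT hTn (by simpa using hPV)
  rcases eq_or_ne z [] with rfl | hz
  · obtain rfl : Q = P ++ V := by simpa using hPV.symm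
    simpa using commute_dupD_of_after_centre (P := P) (z := []) hV hV' hT hTn (by simpa using hVS)
  rcases eq_or_ne n [] with rfl | hn
  · obtain rfl : V ++ S = W := by simpa using hVS
    simpa using commute_dupD_of_before_centre (S := S) (m := []) hV hV' hT hTn (by simpa using hPV)
  -- otherwise the triple `z ++ n` straddles the centre of the square `V ++ V`
  obtain ⟨x, hxz, hxn⟩ := exists_mem_mem_of_overlap (ne_nil_of_length_pos hV) hz hn hPV hVS
    (by simp at hT; omega)
  exact absurd rfl ((nodup_append.mp hTn).2.2 x hxz x hxn)

theorem DerivLE.commute_dupD {a b c : List α} (h₁ : DerivLE 2 a b) (h₂ : DupD 3 b c) :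
    ∃ d, DupD 3 a d ∧ DerivLE 2 d c := by
  induction h₁ generalizing c with
  | refl => exact ⟨c, h₂, .refl⟩
  | tail _ hstep ih =>
    obtain ⟨d', hd', hd'c⟩ := hstep.commute_dupD h₂
    obtain ⟨d, had, hdd'⟩ := ih hd'
    exact ⟨d, had, hdd'.tail hd'c⟩

theorem DerivLE.exists_derivD_derivLE_two {x z : List α} (h : DerivLE 3 x z) :
    ∃ x', DerivD 3 x x' ∧ DerivLE 2 x' z := by
  induction h with
  | refl => exact ⟨x, .refl, .refl⟩
  | tail _ hstep ih =>
    obtain ⟨x', hxx', hx'b⟩ := ih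
    rcases hstep.dupD_or_derivLE_two with hD | h₂
    · obtain ⟨x'', hx'x'', hx''⟩ := hx'b.commute_dupD hD
      exact ⟨x'', hxx'.tail hx'x'', hx''⟩
    · exact ⟨x', hxx', hx'b.trans h₂⟩

theorem confusable_iff_distinct_triples_general (q : ℕ) (x y : List (Fin q)) :
    Confusable 3 x y ↔
      ∃ x' y' : List (Fin q),
        DerivD 3 x x' ∧ DerivD 3 y y' ∧ RootsLE 2 x' = RootsLE 2 y' := by
  constructor
  · rintro ⟨z, hxz, hyz⟩
    obtain ⟨x', hxx', hx'z⟩ := hxz.exists_derivD_derivLE_two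
    obtain ⟨y', hyy', hy'z⟩ := hyz.exists_derivD_derivLE_two
    exact ⟨x', y', hxx', hyy',
      (rootsLE_two_eq_of_derivLE hx'z).trans (rootsLE_two_eq_of_derivLE hy'z).symm⟩
  · rintro ⟨x', y', hxx', hyy', hroots⟩
    obtain ⟨r, hr, hrx'⟩ := exists_irredLE_derivLE 2 x'
    have hry' : r ∈ RootsLE 2 y' := hroots ▸ ⟨hr, hrx'⟩
    obtain ⟨z, hx'z, hy'z⟩ := derivLE_two_join hrx' hry'.2
    exact ⟨z, (hxx'.derivLE three_pos).trans (hx'z.mono (by norm_num)),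
      (hyy'.derivLE three_pos).trans (hy'z.mono (by norm_num))⟩

/-- Theorem 8: `x` and `y` are `≤3`-confusable iff there are
`x ⇒*_{3_d} x'` and `y ⇒*_{3_d} y'` with `R_{≤2}(x') = R_{≤2}(y')`. -/
theorem confusable_iff_distinct_triples (q : ℕ) (hq : 2 ≤ q) (x y : List (Fin q)) :
    Confusable 3 x y ↔
      ∃ x' y' : List (Fin q),
        DerivD 3 x x' ∧ DerivD 3 y y' ∧ RootsLE 2 x' = RootsLE 2 y' :=
  confusable_iff_distinct_triples_general q x y
end

section
/- Let r be a ≤3-irreducible word containing at least three distinct symbols. Then Reg(r) can be written as w(abc)^ℓ ab, where a, b, c are pairwise distinct symbols, ℓ ∈ {0,1}, and w is a word of length at most three over the alphabet {a, b, c}. Furthermore, if Reg(r) ⇒*_{3_d} z, then z can be written as w(abc)^m ab for some m ≥ ℓ. Also, the symbol of r immediately following the prefix Reg(r) (if Reg(r) is a proper prefix of r) is not c. -/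
/-!
`Reg r` is the prefix along which `r` follows an eventually 3-periodic sequence: `(r₁r₂r₃)^∞` when
`r₁ ≠ r₃`, and `r₁(r₂r₁r₄)^∞` when `r₁ = r₃`. It stops where `r` leaves that sequence, at the
latest just before a square of length 3 would appear. A length-3 window with distinct symbols of
such a prefix lies in the periodic part, so duplicating it only extends the prefix by one period.
Hence every descendant is `w (abc)^m ab`, and the symbol after `Reg r` is not the one the period
predicts, namely `c`.
-/

open List

variable {α : Type*}

theorem List.exists_eq_cons_of_getElem?_zero {l : List α} {x : α} (h : l[0]? = some x) :
    ∃ t, l = x :: t :=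
  head?_eq_some_iff.1 (head?_eq_getElem? ▸ h)

def PeriodicFrom (d p : ℕ) (f : ℕ → α) : Prop :=
  ∀ i, d ≤ i → f (i + p) = f i

namespace PeriodicFrom

variable {f : ℕ → α} {d p : ℕ}

theorem add_mul (hf : PeriodicFrom d p f) {i : ℕ} (hi : d ≤ i) (m : ℕ) :
    f (i + p * m) = f i := by
  induction m with
  | zero => simp
  | succ m ih => rw [Nat.mul_succ, ← Nat.add_assoc, hf _ (by omega), ih]

theorem map_range'_add_mul (hf : PeriodicFrom d p f) {s : ℕ} (hs : d ≤ s) (m l : ℕ) :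
    (range' (s + p * m) l).map f = (range' s l).map f := by
  rw [Nat.add_comm, ← map_add_range', map_map]
  refine map_congr_left fun i hi => ?_
  rw [Function.comp_apply, Nat.add_comm, hf.add_mul (hs.trans (mem_range'_1.1 hi).1)]

theorem map_range'_add (hf : PeriodicFrom d p f) {s : ℕ} (hs : d ≤ s) (l : ℕ) :
    (range' (s + p) l).map f = (range' s l).map f := by
  simpa using hf.map_range'_add_mul hs 1 l

theorem map_range'_mul (hf : PeriodicFrom d p f) {s : ℕ} (hs : d ≤ s) (m : ℕ) :
    (range' s (p * m)).map f = (replicate m ((range' s p).map f)).flatten := by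
  induction m with
  | zero => simp
  | succ m ih =>
    rw [Nat.mul_succ, ← range'_append_1, map_append, ih, hf.map_range'_add_mul hs,
      replicate_succ', flatten_append, flatten_singleton]

theorem map_range_add_mul_add (hf : PeriodicFrom d p f) {j : ℕ} (hj : d ≤ j) (m e : ℕ) :
    (range (j + p * m + e)).map f =
      (range j).map f ++ (replicate m ((range' j p).map f)).flatten ++ (range' j e).map f := by
  rw [range_eq_range', range_eq_range', ← range'_append_1, ← range'_append_1]
  simp only [Nat.zero_add, map_append]
  rw [hf.map_range'_mul hj, hf.map_range'_add_mul hj]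

theorem map_range'_succ (hf : PeriodicFrom d p f) (hp : 0 < p) {i : ℕ} (hi : d ≤ i) :
    (range' (i + 1) p).map f = ((range' i p).map f).rotate 1 := by
  obtain ⟨q, rfl⟩ := Nat.exists_eq_add_of_lt hp
  rw [Nat.zero_add] at hf ⊢
  rw [range'_1_concat (s := i + 1), range'_succ (s := i), map_cons, rotate_cons_succ, rotate_zero,
    map_append, map_singleton, show i + 1 + q = i + (q + 1) by omega, hf i hi]

theorem isRotated_map_range' (hf : PeriodicFrom d p f) (hp : 0 < p) {i : ℕ} (hi : d ≤ i) :
    (range' d p).map f ~r (range' i p).map f := by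
  induction i, hi using Nat.le_induction with
  | base => rfl
  | succ i hi ih => exact ih.trans ⟨1, (hf.map_range'_succ hp hi).symm⟩

theorem dupD_map_range (hf : PeriodicFrom d p f)
    (hwin : ∀ i < d, ¬ ((range' i p).map f).Nodup) {n : ℕ} {z : List α}
    (h : DupD p ((range n).map f) z) : z = (range (n + p)).map f := by
  obtain ⟨u, v, t, hx, hv, hnd, rfl⟩ := h
  rw [range_eq_range', map_eq_append_iff] at hx
  obtain ⟨l, lt, hl, huv, rfl⟩ := hx
  obtain ⟨k, hk, rfl, rfl⟩ := range'_eq_append_iff.1 hl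
  rw [map_eq_append_iff] at huv
  obtain ⟨lu, lv, hl', rfl, rfl⟩ := huv
  obtain ⟨i, hi, rfl, rfl⟩ := range'_eq_append_iff.1 hl'
  obtain ⟨q, rfl⟩ := Nat.exists_eq_add_of_le hi
  simp only [length_map, length_range', Nat.add_sub_cancel_left] at hv
  subst hv
  simp only [Nat.zero_add, Nat.mul_one, Nat.add_sub_cancel_left] at hnd ⊢
  have hdi : d ≤ i := by
    by_contra! hid
    exact hwin i hid hnd
  have hn : n + q = i + q + q + (n - (i + q)) := by omega
  rw [range_eq_range', hn, ← range'_append_1, ← range'_append_1, ← range'_append_1]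
  simp only [Nat.zero_add, map_append]
  rw [hf.map_range'_add (s := i + q) (by omega), hf.map_range'_add hdi q]

theorem derivD_map_range (hf : PeriodicFrom d p f)
    (hwin : ∀ i < d, ¬ ((range' i p).map f).Nodup) {n : ℕ} {z : List α}
    (h : DerivD p ((range n).map f) z) : ∃ m, z = (range (n + p * m)).map f := by
  induction h with
  | refl => exact ⟨0, by simp⟩
  | tail _ hstep ih =>
    obtain ⟨m, rfl⟩ := ih
    exact ⟨m + 1, by rw [hf.dupD_map_range hwin hstep, Nat.mul_succ, Nat.add_assoc]⟩

end PeriodicFrom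

theorem region_structure_of_periodicFrom [DecidableEq α] {r : List α} {f : ℕ → α} {d k : ℕ}
    (hf : PeriodicFrom d 3 f) (hwin : ∀ i < d, ¬ ((range' i 3).map f).Nodup)
    (hnd : ((range' d 3).map f).Nodup) (hd : d ≤ 1) (hdk : d + 2 ≤ k) (hkd : k ≤ d + 7)
    (hreg : Reg r = (range k).map f) (hnext : r[k]? ≠ some (f k)) :
    ∃ (a b c : α) (w : List α) (ℓ : ℕ),
      a ≠ b ∧ b ≠ c ∧ a ≠ c ∧ ℓ ≤ 1 ∧ w.length ≤ 3 ∧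
      (∀ s ∈ w, s = a ∨ s = b ∨ s = c) ∧
      Reg r = w ++ (List.replicate ℓ [a, b, c]).flatten ++ [a, b] ∧
      (∀ z : List α, DerivD 3 (Reg r) z →
        ∃ m : ℕ, ℓ ≤ m ∧ z = w ++ (List.replicate m [a, b, c]).flatten ++ [a, b]) ∧
      (∀ s : α, r[(Reg r).length]? = some s → s ≠ c) := by
  -- `w` is the prefix of length `j ≡ k - 2 (mod 3)` with `d ≤ j ≤ d + 2`.
  obtain ⟨j, ℓ, hdj, hj, rfl⟩ : ∃ j ℓ, d ≤ j ∧ j ≤ d + 2 ∧ k = j + 3 * ℓ + 2 :=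
    ⟨d + (k - 2 - d) % 3, (k - 2 - d) / 3, by omega, by omega, by omega⟩
  have hrot := hf.isRotated_map_range' three_pos hdj
  have hshape : ∀ m, (range (j + 3 * m + 2)).map f =
      (range j).map f ++ (replicate m [f j, f (j + 1), f (j + 2)]).flatten ++ [f j, f (j + 1)] := by
    intro m
    simp [hf.map_range_add_mul_add hdj, range'_succ]
  have hmem : ∀ i < j, f i ∈ (range' d 3).map f := by
    intro i hi
    by_cases hdi : d ≤ i
    · exact (hf.isRotated_map_range' three_pos hdi).mem_iff.2 (by simp [range'_succ])
    · obtain ⟨rfl, rfl⟩ : i = 0 ∧ d = 1 := by omega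
      have h012 := hwin 0 one_pos
      simp only [range'_succ, map_cons, range'_zero, map_nil, nodup_cons, mem_cons] at h012 hnd ⊢
      tauto
  have habc := hrot.nodup_iff.1 hnd
  simp only [range'_succ, map_cons, range'_zero, map_nil, nodup_cons, mem_cons, not_or] at habc
  refine ⟨f j, f (j + 1), f (j + 2), (range j).map f, ℓ, habc.1.1, habc.2.1.1, habc.1.2.1,
    by omega, by rw [length_map, length_range]; omega, ?_, by rw [hreg, hshape], ?_, ?_⟩
  · simp only [mem_map, mem_range, forall_exists_index, and_imp]
    rintro _ i hi rfl
    simpa [range'_succ] using hrot.mem_iff.1 (hmem i hi)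
  · intro z hz
    rw [hreg] at hz
    obtain ⟨m, rfl⟩ := hf.derivD_map_range hwin hz
    exact ⟨ℓ + m, by omega, by rw [← hshape]; ring_nf⟩
  · rintro s hs rfl
    rw [hreg, length_map, length_range] at hs
    have hc : f (j + 3 * ℓ + 2) = f (j + 2) := by
      rw [show j + 3 * ℓ + 2 = j + 2 + 3 * ℓ by omega, hf.add_mul (by omega)]
    exact hnext (hc ▸ hs)

def cyclic3 (a b c : α) (i : ℕ) : α := [a, b, c].getD (i % 3) a

theorem periodicFrom_cyclic3 (a b c : α) (d : ℕ) : PeriodicFrom d 3 (cyclic3 a b c) :=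
  fun i _ => by simp [cyclic3]

theorem periodicFrom_update_cyclic3 (a b c x : α) :
    PeriodicFrom 1 3 (Function.update (cyclic3 a b c) 0 x) :=
  fun i hi => by simp [Function.update, cyclic3, show i ≠ 0 by omega]

section Reg
variable [DecidableEq α] {a b c e : α} {t : List α}

theorem exists_reg_eq_map_cyclic3 (hirr : IrredLE 3 (a :: b :: c :: t)) (hac : a ≠ c) :
    ∃ k, 3 ≤ k ∧ k ≤ 5 ∧ Reg (a :: b :: c :: t) = (range k).map (cyclic3 a b c) ∧
      (a :: b :: c :: t)[k]? ≠ some (cyclic3 a b c k) := by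
  by_cases h3 : t[0]? = some a
  · obtain ⟨t, rfl⟩ := exists_eq_cons_of_getElem?_zero h3
    by_cases h4 : t[0]? = some b
    · obtain ⟨t, rfl⟩ := exists_eq_cons_of_getElem?_zero h4
      refine ⟨5, by norm_num, le_rfl, by simp [Reg, cyclic3, hac, range_succ], fun h5 => ?_⟩
      obtain ⟨t, rfl⟩ := exists_eq_cons_of_getElem?_zero (by simpa [cyclic3] using h5)
      exact hirr ⟨[], [a, b, c], t, by simp, by simp, by simp⟩
    · exact ⟨4, by norm_num, by norm_num, by simp [Reg, cyclic3, hac, Ne.symm h4, range_succ],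
        by simpa [cyclic3] using h4⟩
  · exact ⟨3, le_rfl, by norm_num, by simp [Reg, cyclic3, hac, Ne.symm h3, range_succ],
      by simpa [cyclic3] using h3⟩

-- `Function.update (cyclic3 e b a) 0 a` is the sequence `a (b a e)^∞`.
theorem exists_reg_eq_map_update_cyclic3 (hirr : IrredLE 3 (a :: b :: a :: e :: t)) :
    ∃ k, 4 ≤ k ∧ k ≤ 6 ∧
      Reg (a :: b :: a :: e :: t) = (range k).map (Function.update (cyclic3 e b a) 0 a) ∧
      (a :: b :: a :: e :: t)[k]? ≠ some (Function.update (cyclic3 e b a) 0 a k) := by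
  by_cases h4 : t[0]? = some b
  · obtain ⟨t, rfl⟩ := exists_eq_cons_of_getElem?_zero h4
    by_cases h5 : t[0]? = some a
    · obtain ⟨t, rfl⟩ := exists_eq_cons_of_getElem?_zero h5
      refine ⟨6, by norm_num, le_rfl, by simp [Reg, cyclic3, range_succ], fun h6 => ?_⟩
      obtain ⟨t, rfl⟩ := exists_eq_cons_of_getElem?_zero (by simpa [cyclic3] using h6)
      exact hirr ⟨[a], [b, a, e], t, by simp, by simp, by simp⟩
    · exact ⟨5, by norm_num, by norm_num, by simp [Reg, cyclic3, Ne.symm h5, range_succ],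
        by simpa [cyclic3] using h5⟩
  · exact ⟨4, le_rfl, by norm_num, by simp [Reg, cyclic3, Ne.symm h4, range_succ],
      by simpa [cyclic3] using h4⟩

end Reg

/-- Lemma 9: for a `≤3`-irreducible word `r` with at least three distinct
symbols, `Reg(r) = w (abc)^ℓ ab` with `a, b, c` pairwise distinct, `ℓ ∈ {0,1}` and `w` of
length at most three over `{a,b,c}`; every `z` with `Reg(r) ⇒*_{3_d} z` has the form
`w (abc)^m ab` with `m ≥ ℓ`; and the symbol of `r` right after the prefix `Reg(r)` is not `c`. -/
theorem region_structure (q : ℕ) (r : List (Fin q)) (hirr : IrredLE 3 r) (h3 : Has3 r) :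
    ∃ (a b c : Fin q) (w : List (Fin q)) (ℓ : ℕ),
      a ≠ b ∧ b ≠ c ∧ a ≠ c ∧ ℓ ≤ 1 ∧ w.length ≤ 3 ∧
      (∀ s ∈ w, s = a ∨ s = b ∨ s = c) ∧
      Reg r = w ++ (List.replicate ℓ [a, b, c]).flatten ++ [a, b] ∧
      (∀ z : List (Fin q), DerivD 3 (Reg r) z →
        ∃ m : ℕ, ℓ ≤ m ∧ z = w ++ (List.replicate m [a, b, c]).flatten ++ [a, b]) ∧
      (∀ s : Fin q, r[(Reg r).length]? = some s → s ≠ c) := by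
  obtain ⟨a, b, c, t, rfl⟩ : ∃ a b c t, r = a :: b :: c :: t := by
    match r, h3.trans (toFinset_card_le r) with
    | a :: b :: c :: t, _ => exact ⟨a, b, c, t, rfl⟩
  have hab : a ≠ b := fun h => hirr ⟨[], [a], c :: t, by simp, by simp, by simp [h]⟩
  have hbc : b ≠ c := fun h => hirr ⟨[a], [b], t, by simp, by simp, by simp [h]⟩
  by_cases hac : a = c
  · subst hac
    obtain ⟨e, t, rfl⟩ : ∃ e t', t = e :: t' := by
      refine exists_cons_of_ne_nil ?_
      rintro rfl
      have h2 : ([a, b, a] : List (Fin q)).toFinset.card ≤ 2 := by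
        simpa using Finset.card_le_two
      exact absurd (h3.trans h2) (by norm_num)
    have hae : a ≠ e := fun h => hirr ⟨[a, b], [a], t, by simp, by simp, by simp [h]⟩
    have hbe : b ≠ e := fun h => hirr ⟨[], [a, b], t, by simp, by simp, by simp [h]⟩
    obtain ⟨k, hk4, hk6, hreg, hnext⟩ := exists_reg_eq_map_update_cyclic3 hirr
    exact region_structure_of_periodicFrom (periodicFrom_update_cyclic3 e b a a)
      (by simp [range'_succ, cyclic3]) (by simp [range'_succ, cyclic3, hab.symm, hae, hbe])
      le_rfl (by omega) (by omega) hreg hnext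
  · obtain ⟨k, hk3, hk5, hreg, hnext⟩ := exists_reg_eq_map_cyclic3 hirr hac
    exact region_structure_of_periodicFrom (periodicFrom_cyclic3 a b c 0) (by simp)
      (by simp [range'_succ, cyclic3, hab, hbc, hac]) (Nat.zero_le 1) (by omega) (by omega)
      hreg hnext
end

section
/- Over the alphabet Σ₃ = {0,1,2}, the words x = 012012 and y = 011112 satisfy R_{≤3}(x) = R_{≤3}(y) = {012}, yet x and y are not ≤3-confusable (every ≤3-descendant of x contains an occurrence of the symbol 2 to the left of an occurrence of the symbol 0, whereas no ≤3-descendant of y does). -/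
/-!
Undoing a duplication deletes one copy of a square `v v`, so the `≤3`-ancestors of a word can
be enumerated, and both words have `012` as their only irreducible ancestor.

A duplication keeps its source as a subsequence, so every descendant of `012012` has a `2`
before a `0`. In `011112` every `0` lies at least `3` positions before every `2`; a duplicated
block of length at most `3` is too short to contain both symbols, so duplications only move
them further apart and no descendant of `011112` has a `2` before a `0`.
-/

namespace List

variable {α : Type*}

def dupPreds [DecidableEq α] (k : ℕ) (x : List α) : List (List α) :=
  (range (x.length + 1)).flatMap fun i =>
    (range' 1 k).filterMap fun l =>
      let v := (x.drop i).take l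
      if v.length = l ∧ v ++ v <+: x.drop i then some (x.take i ++ (x.drop i).drop l) else none

theorem mem_dupPreds [DecidableEq α] {k : ℕ} {c x : List α} :
    c ∈ dupPreds k x ↔ DupLE k c x := by
  simp only [dupPreds, mem_flatMap, mem_range, mem_filterMap, mem_range'_1,
    Option.ite_none_right_eq_some, Option.some.injEq]
  constructor
  · rintro ⟨i, -, l, ⟨hl1, hlk⟩, ⟨hlen, w, hw⟩, rfl⟩
    set v := (x.drop i).take l
    have hx : x = x.take i ++ v ++ v ++ w := by
      rw [append_assoc _ v, append_assoc _ v, ← append_assoc v, hw, take_append_drop]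
    refine ⟨x.take i, v, w, ?_, by omega, by omega, hx⟩
    rw [← hw, append_assoc, append_assoc, drop_left' hlen]
  · rintro ⟨u, v, w, rfl, hv1, hvk, rfl⟩
    refine ⟨u.length, by simp, v.length, ⟨hv1, by omega⟩, ?_, ?_⟩ <;> simp

theorem getElem?_dup (u v w : List α) (i : ℕ) :
    (u ++ v ++ v ++ w)[i]? =
      (u ++ v ++ w)[if i < u.length + v.length then i else i - v.length]? := by
  have huv : (u ++ v).length = u.length + v.length := length_append
  rw [append_assoc (u ++ v)]
  split_ifs with h
  · rw [getElem?_append_left (l₁ := u ++ v) (by omega),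
      getElem?_append_left (l₁ := u ++ v) (by omega)]
  · rw [getElem?_append_right (l₁ := u ++ v) (by omega), append_assoc u,
      getElem?_append_right (l₁ := u) (by omega), huv]
    congr 1
    omega

end List

section Roots

variable {α : Type*} [DecidableEq α] {k : ℕ}

theorem irredLE_iff_dupPreds_eq_nil {x : List α} : IrredLE k x ↔ x.dupPreds k = [] := by
  simp only [List.eq_nil_iff_forall_not_mem, List.mem_dupPreds, IrredLE, DupLE]
  constructor
  · rintro h c ⟨u, v, w, -, hv1, hvk, hx⟩
    exact h ⟨u, v, w, hv1, hvk, hx⟩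
  · rintro h ⟨u, v, w, hv1, hvk, hx⟩
    exact h (u ++ v ++ w) ⟨u, v, w, rfl, hv1, hvk, hx⟩

theorem DerivLE.mem_of_dupPreds_subset {L : List (List α)} (hL : ∀ t ∈ L, t.dupPreds k ⊆ L)
    {z x : List α} (h : DerivLE k z x) (hx : x ∈ L) : z ∈ L := by
  induction h using Relation.ReflTransGen.head_induction_on with
  | refl => exact hx
  | head hstep _ ih => exact hL _ ih (List.mem_dupPreds.2 hstep)

theorem rootsLE_eq_singleton {x r : List α} (L : List (List α))
    (hL : ∀ t ∈ L, t.dupPreds k ⊆ L) (hx : x ∈ L)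
    (hroot : ∀ z ∈ L, z.dupPreds k = [] → z = r) (hr : r.dupPreds k = [])
    (hrx : DerivLE k r x) : RootsLE k x = {r} := by
  ext z
  constructor
  · rintro ⟨hz, hzx⟩
    exact hroot z (hzx.mem_of_dupPreds_subset hL hx) (irredLE_iff_dupPreds_eq_nil.1 hz)
  · rintro rfl
    exact ⟨irredLE_iff_dupPreds_eq_nil.2 hr, hrx⟩

end Roots

section Order

open List

variable {α : Type*} {k : ℕ}

theorem DupLE.sublist {x y : List α} (h : DupLE k x y) : x <+ y := by
  obtain ⟨u, v, w, rfl, -, -, rfl⟩ := h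
  simpa only [append_assoc] using ((sublist_append_right v (v ++ w)).append_left u)

theorem DerivLE.sublist {x y : List α} (h : DerivLE k x y) : x <+ y := by
  induction h with
  | refl => exact .refl x
  | tail _ hstep ih => exact ih.trans hstep.sublist

def PrecedesBy (k : ℕ) (a b : α) (w : List α) : Prop :=
  ∀ i j, w[i]? = some a → w[j]? = some b → i + k ≤ j

/-- The duplicated block has length at most `k`, so it cannot contain both an `a` and a `b`;
hence a duplication never brings an `a` and a `b` closer together. -/
theorem PrecedesBy.of_dupLE {a b : α} {s t : List α} (h : DupLE k s t) (hs : PrecedesBy k a b s) :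
    PrecedesBy k a b t := by
  obtain ⟨u, v, w, rfl, -, hvk, rfl⟩ := h
  intro i j hi hj
  rw [getElem?_dup] at hi hj
  have := hs _ _ hi hj
  split_ifs at this <;> omega

theorem PrecedesBy.of_derivLE {a b : α} {s t : List α} (h : DerivLE k s t)
    (hs : PrecedesBy k a b s) : PrecedesBy k a b t := by
  induction h with
  | refl => exact hs
  | tail _ hstep ih => exact ih.of_dupLE hstep

theorem PrecedesBy.not_sublist {a b : α} {w : List α} (h : PrecedesBy k a b w) :
    ¬ [b, a] <+ w := by
  rw [cons_sublist_iff]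
  rintro ⟨p, q, rfl, hb, haq⟩
  obtain ⟨i, hi, rfl⟩ := getElem_of_mem hb
  obtain ⟨j, hj, rfl⟩ := getElem_of_mem (singleton_sublist.1 haq)
  have := h (p.length + j) i (by simp [getElem?_append_right]) (by simp [getElem?_append_left hi])
  omega

end Order

/-- Example 4: over `Σ₃`, the words `x = 012012` and `y = 011112` have
the same `≤3`-root set `{012}`, yet they are not `≤3`-confusable. -/
theorem example_not_confusable :
    RootsLE 3 ([0, 1, 2, 0, 1, 2] : List (Fin 3)) = {[0, 1, 2]} ∧
    RootsLE 3 ([0, 1, 1, 1, 1, 2] : List (Fin 3)) = {[0, 1, 2]} ∧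
    ¬ Confusable 3 ([0, 1, 2, 0, 1, 2] : List (Fin 3)) [0, 1, 1, 1, 1, 2] := by
  have h012 : ([0, 1, 2] : List (Fin 3)).dupPreds 3 = [] := by decide
  have hx : DerivLE 3 ([0, 1, 2] : List (Fin 3)) [0, 1, 2, 0, 1, 2] :=
    .single (List.mem_dupPreds.1 (by decide))
  have hy : DerivLE 3 ([0, 1, 2] : List (Fin 3)) [0, 1, 1, 1, 1, 2] :=
    .head (b := [0, 1, 1, 2]) (List.mem_dupPreds.1 (by decide)) <|
      .head (b := [0, 1, 1, 1, 2]) (List.mem_dupPreds.1 (by decide)) <|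
        .single (List.mem_dupPreds.1 (by decide))
  refine ⟨rootsLE_eq_singleton [[0, 1, 2, 0, 1, 2], [0, 1, 2]]
      (by decide) (by decide) (by decide) h012 hx,
    rootsLE_eq_singleton [[0, 1, 1, 1, 1, 2], [0, 1, 1, 1, 2], [0, 1, 1, 2], [0, 1, 2]]
      (by decide) (by decide) (by decide) h012 hy, ?_⟩
  rintro ⟨z, hxz, hyz⟩
  have h20 : List.Sublist [2, 0] ([0, 1, 2, 0, 1, 2] : List (Fin 3)) := by decide
  have hsep : PrecedesBy 3 (0 : Fin 3) 2 [0, 1, 1, 1, 1, 2] := by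
    intro i j hi hj
    obtain ⟨hi, hi'⟩ := List.getElem?_eq_some_iff.1 hi
    obtain ⟨hj, hj'⟩ := List.getElem?_eq_some_iff.1 hj
    simp only [List.length_cons, List.length_nil] at hi hj
    interval_cases i <;> interval_cases j <;> simp_all
  exact (hsep.of_derivLE hyz).not_sublist (h20.trans hxz.sublist)
end
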